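/- Let G be a Gamma random variable with shape 1/2 and rate 1/2, i.e., with density g(x) = (1/√(2π)) x^{−1/2} e^{−x/2} on (0,∞). Then for every θ ≥ 0, E[exp(−θ²/(2G))] = exp(−θ), i.e., ∫₀^∞ exp(−θ²/(2x)) · (1/√(2π)) · x^{−1/2} · e^{−x/2} dx = e^{−θ}. -/

import Mathlib

/-!
Substituting `x = t ^ 2` completes the square in the exponent and turns the integral into
`2 e^{-θ} / √(2π) · ∫₀^∞ exp (-(t - θ/t)² / 2) dt`. For the remaining integral use the
Cauchy–Schlömilch substitution `u = t - θ/t`, a bijection `(0, ∞) → ℝ` with Jacobian `1 + θ/t²`: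
the involution `t ↦ θ/t` exchanges the two parts `1` and `θ/t²` of the Jacobian, so the integral
is half the full Gaussian integral `√(2π)`.
-/

open MeasureTheory Real Set

lemma hasDerivAt_const_div (c : ℝ) {x : ℝ} (hx : x ≠ 0) :
    HasDerivAt (fun t => c / t) (-(c / x ^ 2)) x := by
  simpa [div_eq_mul_inv] using (hasDerivAt_inv hx).const_mul c

lemma image_const_div_Ioi {c : ℝ} (hc : 0 < c) : (fun t => c / t) '' Ioi 0 = Ioi 0 := by
  ext y
  constructor
  · rintro ⟨x, hx, rfl⟩
    exact div_pos hc hx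
  · intro hy
    exact ⟨c / y, div_pos hc hy, div_div_cancel₀ hc.ne'⟩

lemma integral_Ioi_div_sq_smul_comp_const_div {E : Type*} [NormedAddCommGroup E]
    [NormedSpace ℝ E] {c : ℝ} (hc : 0 < c) (h : ℝ → E) :
    ∫ t in Ioi 0, (c / t ^ 2) • h (c / t) = ∫ t in Ioi 0, h t := by
  have hinj : InjOn (fun t => c / t) (Ioi 0) := fun a _ b _ hab => by
    rw [← div_div_cancel₀ hc.ne' (b := a), ← div_div_cancel₀ hc.ne' (b := b)]
    exact congrArg (c / ·) hab
  have hchange := integral_image_eq_integral_abs_deriv_smul measurableSet_Ioi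
    (fun x hx => (hasDerivAt_const_div c (ne_of_gt hx)).hasDerivWithinAt) hinj h
  rw [image_const_div_Ioi hc] at hchange
  rw [hchange]
  refine setIntegral_congr_fun measurableSet_Ioi fun t ht => ?_
  rw [abs_neg, abs_of_pos (div_pos hc (pow_pos ht 2))]

lemma strictMonoOn_sub_div {θ : ℝ} (hθ : 0 ≤ θ) : StrictMonoOn (fun t => t - θ / t) (Ioi 0) :=
  fun a ha b _ hab => by
    linarith [div_le_div_of_nonneg_left hθ ha hab.le]

lemma image_sub_div_Ioi {θ : ℝ} (hθ : 0 < θ) : (fun t => t - θ / t) '' Ioi 0 = univ := by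
  refine eq_univ_of_forall fun u => ?_
  set s := √(u ^ 2 + 4 * θ)
  have hs : s ^ 2 = u ^ 2 + 4 * θ := sq_sqrt (by positivity)
  have hus : |u| < s := by
    rw [← sqrt_sq_eq_abs]
    exact sqrt_lt_sqrt (sq_nonneg u) (by linarith)
  have hpos : 0 < u + s := by linarith [neg_abs_le u]
  -- the positive root of `t ^ 2 - u * t - θ`
  refine ⟨(u + s) / 2, half_pos hpos, ?_⟩
  field_simp
  nlinarith

lemma two_mul_integral_Ioi_comp_sub_div {g : ℝ → ℝ} (hg : g.Even) (hint : Integrable g)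
    {θ : ℝ} (hθ : 0 ≤ θ) : 2 * ∫ t in Ioi 0, g (t - θ / t) = ∫ u, g u := by
  rcases hθ.eq_or_lt with rfl | hθ
  · simp_rw [zero_div, sub_zero, ← integral_comp_abs (f := g)]
    congr 1 with u
    rcases abs_choice u with h | h <;> rw [h]
    exact hg u
  set f : ℝ → ℝ := fun t => t - θ / t
  have hf' : ∀ t ∈ Ioi (0 : ℝ), HasDerivWithinAt f (1 + θ / t ^ 2) (Ioi 0) t := fun t ht => by
    have hderiv := (hasDerivAt_id' t).sub (hasDerivAt_const_div θ (ne_of_gt ht))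
    rw [sub_neg_eq_add] at hderiv
    exact hderiv.hasDerivWithinAt
  have hinj := (strictMonoOn_sub_div hθ.le).injOn
  have hchange := integral_image_eq_integral_abs_deriv_smul measurableSet_Ioi hf' hinj g
  rw [image_sub_div_Ioi hθ, setIntegral_univ] at hchange
  have hweighted := (integrableOn_image_iff_integrableOn_abs_deriv_smul measurableSet_Ioi hf'
    hinj g).mp (by rw [image_sub_div_Ioi hθ]; exact hint.integrableOn)
  have hweight_pos : ∀ t, 0 < 1 + θ / t ^ 2 := fun t => by positivity
  have hcomp : IntegrableOn (fun t => g (f t)) (Ioi 0) := by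
    refine IntegrableOn.congr_fun (hweighted.bdd_mul (f := fun t => (1 + θ / t ^ 2)⁻¹) (c := 1)
      (by fun_prop : Measurable fun t : ℝ => (1 + θ / t ^ 2)⁻¹).aestronglyMeasurable
      (ae_of_all _ fun t => ?_)) (fun t _ => ?_) measurableSet_Ioi
    · rw [norm_inv, Real.norm_of_nonneg (hweight_pos t).le]
      exact inv_le_one_of_one_le₀ (le_add_of_nonneg_right (by positivity))
    · rw [abs_of_pos (hweight_pos t), smul_eq_mul, inv_mul_cancel_left₀ (hweight_pos t).ne']
  have hsplit : ∀ t ∈ Ioi (0 : ℝ), |1 + θ / t ^ 2| • g (f t) = g (f t) + θ / t ^ 2 * g (f t) :=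
    fun t _ => by rw [abs_of_pos (hweight_pos t), smul_eq_mul]; ring
  -- `t ↦ θ / t` maps `f` to `-f`
  have hsymm : ∫ t in Ioi 0, θ / t ^ 2 * g (f t) = ∫ t in Ioi 0, g (f t) := by
    rw [← integral_Ioi_div_sq_smul_comp_const_div hθ (fun t => g (f t))]
    congr 1 with t
    rw [smul_eq_mul, ← hg (f t)]
    simp only [f, div_div_cancel₀ hθ.ne', neg_sub]
  have hdiff : IntegrableOn (fun t => θ / t ^ 2 * g (f t)) (Ioi 0) :=
    (hweighted.sub hcomp).congr_fun (fun t ht => by simp only [Pi.sub_apply, hsplit t ht]; ring)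
      measurableSet_Ioi
  rw [hchange, setIntegral_congr_fun measurableSet_Ioi hsplit, integral_add hcomp hdiff, hsymm,
    two_mul]

lemma integral_Ioi_exp_neg_half_mul_sq_sub_div {θ : ℝ} (hθ : 0 ≤ θ) :
    ∫ t in Ioi 0, exp (-(1 / 2) * (t - θ / t) ^ 2) = √(2 * π) / 2 := by
  have h := two_mul_integral_Ioi_comp_sub_div (g := fun u => exp (-(1 / 2) * u ^ 2))
    (fun u => by simp) (integrable_exp_neg_mul_sq (by norm_num)) hθ
  rw [integral_gaussian, show π / (1 / 2) = 2 * π by ring] at h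
  linarith

lemma exp_neg_sq_div_mul_exp_neg_sq_div_two (θ : ℝ) {t : ℝ} (ht : t ≠ 0) :
    exp (-θ ^ 2 / (2 * t ^ 2)) * exp (-t ^ 2 / 2)
      = exp (-θ) * exp (-(1 / 2) * (t - θ / t) ^ 2) := by
  rw [← exp_add, ← exp_add]
  congr 1
  field_simp
  ring

theorem gamma_mixture_exp (θ : ℝ) (hθ : 0 ≤ θ) :
    ∫ x in Ioi (0 : ℝ),
        Real.exp (-θ ^ 2 / (2 * x)) * ((1 / Real.sqrt (2 * π)) * x ^ (-(1:ℝ)/2) *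
          Real.exp (-x / 2))
      = Real.exp (-θ) := by
  have hsubst : ∀ t ∈ Ioi (0 : ℝ), (2 * t ^ ((2 : ℝ) - 1)) •
      (exp (-θ ^ 2 / (2 * t ^ (2 : ℝ))) *
        ((1 / √(2 * π)) * (t ^ (2 : ℝ)) ^ (-(1:ℝ)/2) * exp (-t ^ (2 : ℝ) / 2)))
      = 2 * exp (-θ) / √(2 * π) * exp (-(1 / 2) * (t - θ / t) ^ 2) := fun t ht => by
    have ht : 0 < t := ht
    have hinv : (t ^ (2 : ℝ)) ^ (-(1:ℝ)/2) = t⁻¹ := by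
      rw [← rpow_mul ht.le]; norm_num [rpow_neg_one]
    rw [hinv, rpow_two, show (2 : ℝ) - 1 = 1 by norm_num, rpow_one, smul_eq_mul]
    calc _ = 2 / √(2 * π) * (t * t⁻¹) * (exp (-θ ^ 2 / (2 * t ^ 2)) * exp (-t ^ 2 / 2)) := by
          ring
      _ = _ := by
          rw [mul_inv_cancel₀ ht.ne', exp_neg_sq_div_mul_exp_neg_sq_div_two θ ht.ne']
          ring
  rw [← integral_comp_rpow_Ioi_of_pos two_pos, setIntegral_congr_fun measurableSet_Ioi hsubst,
    integral_const_mul, integral_Ioi_exp_neg_half_mul_sq_sub_div hθ]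
  field_simp
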